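/- arXiv:2102.01419 — 2 statements merged into one kernel-verified Lean document; each statement's English description precedes it below -/
import Mathlib

section
/- Under the hypotheses of the previous statement, if additionally K₁ = nγ/2 + o(n), K₂ = nγ/2 + o(n), p = α·(log n)/n, q = β·(log n)/n with α > β > 0 and γ ∈ (0,1], then P(X - Y ≤ 0) ≤ n^{-((α+β)γ/2 - γ√(αβ)) + o(1)} as n → ∞. Equivalently, limsup_{n→∞} (log P(Xₙ - Yₙ ≤ 0))/(log n) ≤ -((α+β)γ/2 - γ√(αβ)). -/
open Real Finset Filter

/-! Chernoff bound: for `t ≥ 1`, `𝟙[X ≤ Y] ≤ t ^ (Y - X)`, so `P(X - Y ≤ 0)` is at most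
`E[t^(-X)] E[t^Y] = (1 - p + p / t) ^ K₁ (1 - q + q t) ^ K₂ ≤ exp (K₁ p (1/t - 1) + K₂ q (t - 1))`.
With `p = α log n / n`, `q = β log n / n` the exponent is `log n` times
`(γ/2) (α / t - α + β t - β) + o(1)`, minimised at `t = √(α / β)`. -/

/-- `P(X - Y ≤ 0)` for independent `X ~ Binomial(K₁, p)` and `Y ~ Binomial(K₂, q)`. -/
def binomDiffNonposProb (K₁ K₂ : ℕ) (p q : ℝ) : ℝ :=
  ∑ k ∈ range (K₁ + 1), ∑ j ∈ range (K₂ + 1),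
    if (k : ℤ) - (j : ℤ) ≤ 0 then
      (K₁.choose k : ℝ) * p ^ k * (1 - p) ^ (K₁ - k) *
        ((K₂.choose j : ℝ) * q ^ j * (1 - q) ^ (K₂ - j))
    else 0

lemma sum_choose_mul_pow_mul_pow (K : ℕ) (x y : ℝ) :
    ∑ k ∈ range (K + 1), (K.choose k : ℝ) * x ^ k * y ^ (K - k) = (x + y) ^ K := by
  rw [add_pow]
  exact sum_congr rfl fun k _ => by ring

lemma pow_mul_pow_le_div_pow_mul_mul_pow {p q t : ℝ} (hp : 0 ≤ p) (hq : 0 ≤ q) (ht : 1 ≤ t)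
    {k j : ℕ} (hkj : k ≤ j) : p ^ k * q ^ j ≤ (p / t) ^ k * (q * t) ^ j := by
  obtain ⟨d, rfl⟩ := Nat.exists_eq_add_of_le hkj
  have ht0 : t ≠ 0 := (zero_lt_one.trans_le ht).ne'
  calc p ^ k * q ^ (k + d) ≤ p ^ k * q ^ (k + d) * t ^ d :=
        le_mul_of_one_le_right (by positivity) (one_le_pow₀ ht)
    _ = (p / t) ^ k * (q * t) ^ (k + d) := by
      rw [div_pow, mul_pow, pow_add, pow_add]; field_simp

section BinomDiff

variable {K₁ K₂ : ℕ} {p q : ℝ}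

lemma binomDiffNonposProb_le_mgf {t : ℝ} (ht : 1 ≤ t) (hp0 : 0 ≤ p) (hp1 : p ≤ 1)
    (hq0 : 0 ≤ q) (hq1 : q ≤ 1) :
    binomDiffNonposProb K₁ K₂ p q ≤ (p / t + (1 - p)) ^ K₁ * (q * t + (1 - q)) ^ K₂ := by
  have ht0 : 0 < t := zero_lt_one.trans_le ht
  have h1p : 0 ≤ 1 - p := sub_nonneg.2 hp1
  have h1q : 0 ≤ 1 - q := sub_nonneg.2 hq1
  rw [← sum_choose_mul_pow_mul_pow, ← sum_choose_mul_pow_mul_pow, sum_mul_sum]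
  refine sum_le_sum fun k _ => sum_le_sum fun j _ => ?_
  split_ifs with hkj
  · have := pow_mul_pow_le_div_pow_mul_mul_pow hp0 hq0 ht (k := k) (j := j) (by omega)
    calc (K₁.choose k : ℝ) * p ^ k * (1 - p) ^ (K₁ - k) *
          ((K₂.choose j : ℝ) * q ^ j * (1 - q) ^ (K₂ - j))
        = (K₁.choose k * (1 - p) ^ (K₁ - k) * (K₂.choose j * (1 - q) ^ (K₂ - j))) *
            (p ^ k * q ^ j) := by ring
      _ ≤ (K₁.choose k * (1 - p) ^ (K₁ - k) * (K₂.choose j * (1 - q) ^ (K₂ - j))) *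
            ((p / t) ^ k * (q * t) ^ j) := by gcongr
      _ = _ := by ring
  · positivity

lemma pow_mul_pow_le_binomDiffNonposProb (hp0 : 0 ≤ p) (hp1 : p ≤ 1) (hq0 : 0 ≤ q)
    (hq1 : q ≤ 1) :
    (1 - p) ^ K₁ * (1 - q) ^ K₂ ≤ binomDiffNonposProb K₁ K₂ p q := by
  have h1p : 0 ≤ 1 - p := sub_nonneg.2 hp1
  have h1q : 0 ≤ 1 - q := sub_nonneg.2 hq1
  have hterm : ∀ k j : ℕ, 0 ≤ if (k : ℤ) - (j : ℤ) ≤ 0 then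
      (K₁.choose k : ℝ) * p ^ k * (1 - p) ^ (K₁ - k) *
        ((K₂.choose j : ℝ) * q ^ j * (1 - q) ^ (K₂ - j)) else 0 := by
    intro k j; split_ifs <;> positivity
  refine le_of_eq_of_le (by simp) <| (single_le_sum (fun j _ => hterm 0 j)
    (mem_range.2 K₂.succ_pos)).trans <| single_le_sum (f := fun k => ∑ j ∈ range (K₂ + 1), _)
    (fun k _ => sum_nonneg fun j _ => hterm k j) (mem_range.2 K₁.succ_pos)

lemma binomDiffNonposProb_pos (hp0 : 0 ≤ p) (hp1 : p < 1) (hq0 : 0 ≤ q) (hq1 : q < 1) :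
    0 < binomDiffNonposProb K₁ K₂ p q :=
  (mul_pos (pow_pos (sub_pos.2 hp1) _) (pow_pos (sub_pos.2 hq1) _)).trans_le
    (pow_mul_pow_le_binomDiffNonposProb hp0 hp1.le hq0 hq1.le)

lemma log_binomDiffNonposProb_le {t : ℝ} (ht : 1 ≤ t) (hp0 : 0 ≤ p) (hp1 : p < 1)
    (hq0 : 0 ≤ q) (hq1 : q < 1) :
    log (binomDiffNonposProb K₁ K₂ p q) ≤ K₁ * (p / t - p) + K₂ * (q * t - q) := by
  rw [log_le_iff_le_exp (binomDiffNonposProb_pos hp0 hp1 hq0 hq1), exp_add, exp_nat_mul,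
    exp_nat_mul]
  refine (binomDiffNonposProb_le_mgf ht hp0 hp1.le hq0 hq1.le).trans ?_
  have ht0 : 0 < t := zero_lt_one.trans_le ht
  have hp' : 0 ≤ p / t + (1 - p) := by have := sub_nonneg.2 hp1.le; positivity
  gcongr
  · linarith [add_one_le_exp (p / t - p)]
  · linarith [add_one_le_exp (q * t - q)]

lemma neg_two_mul_le_log_one_sub {p : ℝ} (hp0 : 0 ≤ p) (hp : p ≤ 1 / 2) :
    -(2 * p) ≤ log (1 - p) := by
  have h1p : 0 < 1 - p := by linarith
  refine le_trans ?_ (one_sub_inv_le_log_of_pos h1p)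
  rw [le_sub_iff_add_le, ← le_sub_iff_add_le', inv_le_iff_one_le_mul₀ h1p]
  nlinarith

lemma neg_two_mul_le_log_binomDiffNonposProb (hp0 : 0 ≤ p) (hp : p ≤ 1 / 2) (hq0 : 0 ≤ q)
    (hq : q ≤ 1 / 2) :
    -(2 * (K₁ * p + K₂ * q)) ≤ log (binomDiffNonposProb K₁ K₂ p q) := by
  have h1p : 0 < 1 - p := by linarith
  have h1q : 0 < 1 - q := by linarith
  calc -(2 * (K₁ * p + K₂ * q)) = K₁ * -(2 * p) + K₂ * -(2 * q) := by ring
    _ ≤ K₁ * log (1 - p) + K₂ * log (1 - q) := by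
      gcongr
      exacts [neg_two_mul_le_log_one_sub hp0 hp, neg_two_mul_le_log_one_sub hq0 hq]
    _ = log ((1 - p) ^ K₁ * (1 - q) ^ K₂) := by
      rw [log_mul (by positivity) (by positivity), log_pow, log_pow]
    _ ≤ log (binomDiffNonposProb K₁ K₂ p q) :=
      log_le_log (by positivity) (pow_mul_pow_le_binomDiffNonposProb hp0 (by linarith) hq0
        (by linarith))

end BinomDiff

section Asymptotics

variable {K₁ K₂ : ℕ} {α β x : ℝ}

lemma log_binomDiffNonposProb_div_log_le {t : ℝ} (ht : 1 ≤ t) (hα : 0 ≤ α) (hβ : 0 ≤ β)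
    (hx : 1 < x) (hαx : α * log x / x < 1) (hβx : β * log x / x < 1) :
    log (binomDiffNonposProb K₁ K₂ (α * log x / x) (β * log x / x)) / log x ≤
      K₁ / x * (α / t - α) + K₂ / x * (β * t - β) := by
  have hlog : 0 < log x := log_pos hx
  rw [div_le_iff₀ hlog]
  refine (log_binomDiffNonposProb_le ht (by positivity) hαx (by positivity) hβx).trans_eq ?_
  field_simp

lemma neg_two_mul_le_log_binomDiffNonposProb_div_log (hα : 0 ≤ α) (hβ : 0 ≤ β)
    (hx : 1 < x) (hαx : α * log x / x ≤ 1 / 2) (hβx : β * log x / x ≤ 1 / 2) :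
    -(2 * (K₁ / x * α + K₂ / x * β)) ≤
      log (binomDiffNonposProb K₁ K₂ (α * log x / x) (β * log x / x)) / log x := by
  have hlog : 0 < log x := log_pos hx
  rw [le_div_iff₀ hlog]
  refine le_of_eq_of_le ?_
    (neg_two_mul_le_log_binomDiffNonposProb (by positivity) hαx (by positivity) hβx)
  field_simp

end Asymptotics

lemma eventually_mul_log_div_le (a : ℝ) {c : ℝ} (hc : 0 < c) :
    ∀ᶠ n : ℕ in atTop, a * log n / n ≤ c := by
  have h : Tendsto (fun n : ℕ => a * (log n / n)) atTop (nhds 0) := by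
    simpa using (isLittleO_log_id_atTop.tendsto_div_nhds_zero.comp
      tendsto_natCast_atTop_atTop).const_mul a
  filter_upwards [h.eventually_le_const hc] with n hn
  rwa [mul_div_assoc]

theorem limsup_log_binomDiffNonposProb_div_log_le {α β γ₁ γ₂ t : ℝ} (hα : 0 ≤ α) (hβ : 0 ≤ β)
    (ht : 1 ≤ t) {K₁ K₂ : ℕ → ℕ}
    (hK₁ : Tendsto (fun n => (K₁ n : ℝ) / n) atTop (nhds γ₁))
    (hK₂ : Tendsto (fun n => (K₂ n : ℝ) / n) atTop (nhds γ₂)) :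
    limsup (fun n : ℕ => log (binomDiffNonposProb (K₁ n) (K₂ n) (α * log n / n)
        (β * log n / n)) / log n) atTop ≤ γ₁ * (α / t - α) + γ₂ * (β * t - β) := by
  have hupper := (hK₁.mul_const (α / t - α)).add (hK₂.mul_const (β * t - β))
  have hlower := (((hK₁.mul_const α).add (hK₂.mul_const β)).const_mul 2).neg
  have hsmall : ∀ᶠ n : ℕ in atTop,
      α * log n / n ≤ 1 / 2 ∧ β * log n / n ≤ 1 / 2 ∧ (1 : ℝ) < n := by
    filter_upwards [eventually_mul_log_div_le α one_half_pos,
      eventually_mul_log_div_le β one_half_pos, eventually_gt_atTop 1] with n hαn hβn hn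
    exact ⟨hαn, hβn, by exact_mod_cast hn⟩
  refine (limsup_le_limsup ?_ ?_ hupper.isBoundedUnder_le).trans_eq hupper.limsup_eq
  · filter_upwards [hsmall] with n ⟨hαn, hβn, hn⟩
    exact log_binomDiffNonposProb_div_log_le ht hα hβ hn (by linarith) (by linarith)
  · -- a lower bound is needed: the real `limsup` of a sequence unbounded below is junk
    refine (hlower.isBoundedUnder_ge.mono_ge ?_).isCoboundedUnder_le
    filter_upwards [hsmall] with n ⟨hαn, hβn, hn⟩
    exact neg_two_mul_le_log_binomDiffNonposProb_div_log hα hβ hn hαn hβn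

theorem binomial_diff_tail_asymptotic_general (α β γ : ℝ) (hβ : 0 < β) (hαβ : β < α)
    (K₁ K₂ : ℕ → ℕ)
    (hK₁ : Tendsto (fun n => (K₁ n : ℝ) / n) atTop (nhds (γ / 2)))
    (hK₂ : Tendsto (fun n => (K₂ n : ℝ) / n) atTop (nhds (γ / 2))) :
    Filter.limsup
      (fun n : ℕ =>
        Real.log
          (∑ k ∈ Finset.range (K₁ n + 1), ∑ j ∈ Finset.range (K₂ n + 1),
            if (k : ℤ) - (j : ℤ) ≤ 0 then
              ((K₁ n).choose k : ℝ) * (α * Real.log n / n) ^ k *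
                (1 - α * Real.log n / n) ^ (K₁ n - k) *
              (((K₂ n).choose j : ℝ) * (β * Real.log n / n) ^ j *
                (1 - β * Real.log n / n) ^ (K₂ n - j))
            else 0) / Real.log n) atTop
      ≤ -((α + β) * γ / 2 - γ * Real.sqrt (α * β)) := by
  have hα : 0 < α := hβ.trans hαβ
  have hsα : 0 < √α := sqrt_pos.2 hα
  have hsβ : 0 < √β := sqrt_pos.2 hβ
  have ht : 1 ≤ √α / √β := (one_le_div hsβ).2 (sqrt_le_sqrt hαβ.le)
  refine (limsup_log_binomDiffNonposProb_div_log_le hα.le hβ.le ht hK₁ hK₂).trans_eq ?_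
  rw [sqrt_mul hα.le]
  field_simp
  linear_combination γ * (α - 2 * √α ^ 2) * sq_sqrt hβ.le - γ * β * sq_sqrt hα.le

/-- For independent `Xₙ ~ Binomial(K₁(n), α log n / n)`, `Yₙ ~ Binomial(K₂(n), β log n / n)`
with `K₁(n) = nγ/2 + o(n)`, `K₂(n) = nγ/2 + o(n)`, `α > β > 0`, `γ ∈ (0,1]`:
`P(Xₙ - Yₙ ≤ 0) ≤ n^{-((α+β)γ/2 - γ√(αβ)) + o(1)}`, i.e.
`limsup (log P(Xₙ - Yₙ ≤ 0)) / log n ≤ -((α+β)γ/2 - γ√(αβ))`. -/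
theorem binomial_diff_tail_asymptotic (α β γ : ℝ) (hβ : 0 < β) (hαβ : β < α)
    (hγ0 : 0 < γ) (hγ1 : γ ≤ 1) (K₁ K₂ : ℕ → ℕ)
    (hK₁ : Tendsto (fun n => (K₁ n : ℝ) / n) atTop (nhds (γ / 2)))
    (hK₂ : Tendsto (fun n => (K₂ n : ℝ) / n) atTop (nhds (γ / 2))) :
    Filter.limsup
      (fun n : ℕ =>
        Real.log
          (∑ k ∈ Finset.range (K₁ n + 1), ∑ j ∈ Finset.range (K₂ n + 1),
            if (k : ℤ) - (j : ℤ) ≤ 0 then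
              ((K₁ n).choose k : ℝ) * (α * Real.log n / n) ^ k *
                (1 - α * Real.log n / n) ^ (K₁ n - k) *
              (((K₂ n).choose j : ℝ) * (β * Real.log n / n) ^ j *
                (1 - β * Real.log n / n) ^ (K₂ n - j))
            else 0) / Real.log n) atTop
      ≤ -((α + β) * γ / 2 - γ * Real.sqrt (α * β)) :=
  binomial_diff_tail_asymptotic_general α β γ hβ hαβ K₁ K₂ hK₁ hK₂
end

section
/- Fix α > β > 0 and γ ∈ (0,1) with γ > 2/(√α - √β)². For each even n, let G ~ G(n; p, q) with p = α(log n)/n, q = β(log n)/n and planted balanced communities (S₁, S₂); independently keep each vertex with probability γ to form V^♮, and set Rᵢ = Sᵢ ∩ V^♮. Define Ŝᵢ = Rᵢ ∪ {v ∉ V^♮ : e(v, Rᵢ) > e(v, R_{3-i})}, where e(v, S) is the number of edges from v to S. Then P((Ŝ₁, Ŝ₂) = (S₁, S₂)) → 1 as n → ∞. -/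
open MeasureTheory ProbabilityTheory Finset Filter

/-- Community membership of vertex `v` among `n = 2k` vertices: the two planted balanced
communities are the first `k` and the last `k` vertices. -/
def community (k : ℕ) (v : Fin (2 * k)) : Bool := decide ((v : ℕ) < k)

/-- The planted community labelled `b`. -/
def plantedS (k : ℕ) (b : Bool) : Finset (Fin (2 * k)) :=
  Finset.univ.filter fun v => community k v = b

/-- The sampled part `R_b = S_b ∩ V♮` of community `b`. -/
def sampledR {Ωk : Type*} (k : ℕ) (Keep : Fin (2 * k) → Ωk → Bool) (b : Bool) (ω : Ωk) :
    Finset (Fin (2 * k)) :=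
  (plantedS k b).filter fun v => Keep v ω = true

/-- `e(v, T)`: the number of edges between vertex `v` and the vertex set `T`. -/
def edgeCount {Ωk : Type*} (k : ℕ) (Edge : Fin (2 * k) → Fin (2 * k) → Ωk → Bool)
    (v : Fin (2 * k)) (T : Finset (Fin (2 * k))) (ω : Ωk) : ℕ :=
  (T.filter fun w => Edge v w ω = true).card

/-- The majority-vote estimate `Ŝ_b = R_b ∪ {v ∉ V♮ : e(v,R_b) > e(v,R_{¬b})}`, built from
(estimates of) the sampled communities `Rb`. -/
def majorityS {Ωk : Type*} (k : ℕ) (Edge : Fin (2 * k) → Fin (2 * k) → Ωk → Bool)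
    (Keep : Fin (2 * k) → Ωk → Bool) (Rb : Bool → Ωk → Finset (Fin (2 * k)))
    (b : Bool) (ω : Ωk) : Finset (Fin (2 * k)) :=
  Rb b ω ∪ Finset.univ.filter fun v =>
    Keep v ω = false ∧ edgeCount k Edge v (Rb b ω) ω > edgeCount k Edge v (Rb (!b) ω) ω

open Real

/-! A vertex `v` outside the sample is misclassified only if it has at least as many sampled
neighbours in the other community as in its own. For `w ≠ v` the events "`w` is sampled and
adjacent to `v`" are independent, with probability `γp` for the `k - 1` vertices of `v`'s community
and `γq` for the `k` others. The Chernoff bound applied to the difference of the two counts, at the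
optimal exponent `log √(α/β)`, bounds the misclassification probability of `v` by
`(1 - (1 - √(β/α)) γp)^(k-1) (1 + (√(α/β) - 1) γq)^k ≤ e · n^(-γ(√α - √β)²/2)`, with `n = 2k`.
A union bound over the `n` vertices leaves `e · n^(1 - γ(√α - √β)²/2)`, which tends to `0` because
`γ(√α - √β)² > 2`. -/

theorem exp_mul_indicator_const {Ω : Type*} (A : Set Ω) (c t : ℝ) :
    (fun ω => exp (t * A.indicator (fun _ => c) ω))
      = fun ω => A.indicator (fun _ => exp (t * c) - 1) ω + 1 := by
  ext ω
  by_cases hω : ω ∈ A <;> simp [hω]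

namespace ProbabilityTheory

variable {Ω ι κ : Type*} [MeasurableSpace Ω] {μ : Measure Ω}

theorem iIndepFun.iIndepSet_preimage {β : ι → Type*} {mβ : ∀ i, MeasurableSpace (β i)}
    {f : ∀ i, Ω → β i} (hf : iIndepFun f μ) (hfm : ∀ i, Measurable (f i)) {B : ∀ i, Set (β i)}
    (hB : ∀ i, MeasurableSet (B i)) : iIndepSet (fun i => f i ⁻¹' B i) μ :=
  (iIndepSet_iff_meas_biInter fun i => hfm i (hB i)).2 fun _ =>
    hf.meas_biInter fun i _ => ⟨B i, hB i, rfl⟩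

theorem iIndepSet.measure_biInter_inter {E : ι → Set Ω} (hE : iIndepSet E μ) {g h : κ → ι}
    (hg : g.Injective) (hh : h.Injective) (hgh : ∀ j j', g j ≠ h j') (s : Finset κ) :
    μ (⋂ j ∈ s, (E (g j) ∩ E (h j))) = ∏ j ∈ s, μ (E (g j)) * μ (E (h j)) := by
  classical
  have hdisj : Disjoint (s.image g) (s.image h) := by
    simp only [Finset.disjoint_left, Finset.mem_image]
    rintro _ ⟨j, -, rfl⟩ ⟨j', -, hj'⟩
    exact hgh j j' hj'.symm
  calc μ (⋂ j ∈ s, (E (g j) ∩ E (h j))) = μ (⋂ i ∈ s.image g ∪ s.image h, E i) := by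
        congr 1
        ext ω
        simp [or_imp, forall_and]
    _ = ∏ j ∈ s, μ (E (g j)) * μ (E (h j)) := by
        rw [hE.meas_biInter, Finset.prod_union hdisj, Finset.prod_image hg.injOn,
          Finset.prod_image hh.injOn, Finset.prod_mul_distrib]

theorem iIndepSet.inter_of_injective {E : ι → Set Ω} (hE : iIndepSet E μ)
    (hmeas : ∀ i, MeasurableSet (E i)) {g h : κ → ι} (hg : g.Injective) (hh : h.Injective)
    (hgh : ∀ j j', g j ≠ h j') : iIndepSet (fun j => E (g j) ∩ E (h j)) μ := by
  refine (iIndepSet_iff_meas_biInter fun j => (hmeas _).inter (hmeas _)).2 fun s => ?_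
  rw [hE.measure_biInter_inter hg hh hgh]
  refine Finset.prod_congr rfl fun j _ => ?_
  simpa using (hE.measure_biInter_inter hg hh hgh {j}).symm

theorem mgf_indicator_const [IsProbabilityMeasure μ] {A : Set Ω} (hA : MeasurableSet A)
    (c t : ℝ) : mgf (A.indicator fun _ => c) μ t = 1 + (exp (t * c) - 1) * μ.real A := by
  rw [mgf, exp_mul_indicator_const, integral_add ((integrable_const _).indicator hA)
    (integrable_const 1), integral_indicator_const _ hA, integral_const, probReal_univ,
    smul_eq_mul, smul_eq_mul]
  ring

theorem iIndepSet.measureReal_sum_nonneg_le {A : ι → Set Ω} (hA : iIndepSet A μ)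
    (hmeas : ∀ i, MeasurableSet (A i)) (s : Finset ι) (a : ι → ℝ) :
    μ.real {ω | 0 ≤ ∑ i ∈ s, (A i).indicator (fun _ => a i) ω}
      ≤ ∏ i ∈ s, (1 + (exp (a i) - 1) * μ.real (A i)) := by
  have := hA.isProbabilityMeasure
  set X : ι → Ω → ℝ := fun i => (A i).indicator fun _ => a i
  have hXm : ∀ i, Measurable (X i) := fun i => measurable_const.indicator (hmeas i)
  have hX : iIndepFun X μ := by
    convert (hA.iIndepFun_indicator (β := ℝ) (m := inferInstance)).comp (fun i x => a i * x)
      (fun i => measurable_const.mul measurable_id) using 1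
    ext i ω
    by_cases hω : ω ∈ A i <;> simp [X, hω]
  have hint : Integrable (fun ω => exp (1 * (∑ i ∈ s, X i) ω)) μ := by
    refine hX.integrable_exp_mul_sum hXm fun i _ => ?_
    rw [exp_mul_indicator_const]
    exact ((integrable_const _).indicator (hmeas i)).add (integrable_const 1)
  calc μ.real {ω | 0 ≤ ∑ i ∈ s, X i ω}
      = μ.real {ω | 0 ≤ (∑ i ∈ s, X i) ω} := by simp only [Finset.sum_apply]
    _ ≤ exp (-1 * 0) * mgf (∑ i ∈ s, X i) μ 1 := measure_ge_le_exp_mul_mgf 0 zero_le_one hint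
    _ = ∏ i ∈ s, (1 + (exp (a i) - 1) * μ.real (A i)) := by
        simp only [mul_zero, Real.exp_zero, one_mul, hX.mgf_sum hXm, X,
          mgf_indicator_const (hmeas _)]

theorem iIndepSet.measureReal_card_le_card_le {A : ι → Set Ω} [∀ i, DecidablePred (· ∈ A i)]
    (hA : iIndepSet A μ) (hmeas : ∀ i, MeasurableSet (A i)) {s t : Finset ι}
    (hst : Disjoint s t) {l : ℝ} (hl : 0 ≤ l) :
    μ.real {ω | #{i ∈ s | ω ∈ A i} ≤ #{i ∈ t | ω ∈ A i}}
      ≤ (∏ i ∈ s, (1 + (exp (-l) - 1) * μ.real (A i)))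
        * ∏ i ∈ t, (1 + (exp l - 1) * μ.real (A i)) := by
  classical
  have := hA.isProbabilityMeasure
  set a : ι → ℝ := fun i => if i ∈ s then -l else l
  have has : ∀ i ∈ s, a i = -l := fun i hi => if_pos hi
  have hat : ∀ i ∈ t, a i = l := fun i hi => if_neg (Finset.disjoint_right.1 hst hi)
  have hsum : ∀ (u : Finset ι) (c : ℝ), (∀ i ∈ u, a i = c) → ∀ ω,
      ∑ i ∈ u, (A i).indicator (fun _ => a i) ω = #{i ∈ u | ω ∈ A i} * c := by
    intro u c hc ω
    rw [Finset.sum_congr rfl fun i hi => by rw [hc i hi]]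
    simp only [Set.indicator_apply, ← Finset.sum_filter, Finset.sum_const, nsmul_eq_mul]
  calc μ.real {ω | #{i ∈ s | ω ∈ A i} ≤ #{i ∈ t | ω ∈ A i}}
      ≤ μ.real {ω | 0 ≤ ∑ i ∈ s ∪ t, (A i).indicator (fun _ => a i) ω} := by
        refine measureReal_mono fun ω (hω : #{i ∈ s | ω ∈ A i} ≤ #{i ∈ t | ω ∈ A i}) => ?_
        have hω' : (#{i ∈ s | ω ∈ A i} : ℝ) ≤ #{i ∈ t | ω ∈ A i} := by exact_mod_cast hω
        show 0 ≤ ∑ i ∈ s ∪ t, (A i).indicator (fun _ => a i) ω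
        rw [Finset.sum_union hst, hsum s _ has, hsum t _ hat]
        nlinarith
    _ ≤ ∏ i ∈ s ∪ t, (1 + (exp (a i) - 1) * μ.real (A i)) :=
        hA.measureReal_sum_nonneg_le hmeas _ a
    _ = _ := by
        rw [Finset.prod_union hst]
        congr 1
        · exact Finset.prod_congr rfl fun i hi => by rw [has i hi]
        · exact Finset.prod_congr rfl fun i hi => by rw [hat i hi]

end ProbabilityTheory

theorem one_add_pow_le_exp_mul {x : ℝ} (hx : 0 ≤ 1 + x) (n : ℕ) : (1 + x) ^ n ≤ exp (n * x) := by
  rw [exp_nat_mul]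
  exact pow_le_pow_left₀ hx (by linarith [add_one_le_exp x]) n

theorem one_add_pow_mul_one_add_pow_le_exp {α β γ L p q : ℝ} {k : ℕ} (hβ : 0 < β)
    (hαβ : β < α) (hγ0 : 0 ≤ γ) (hγ1 : γ ≤ 1) (hk : 1 ≤ k) (hp0 : 0 ≤ p) (hp1 : p ≤ 1)
    (hq0 : 0 ≤ q) (hp : 2 * k * p = α * L) (hq : 2 * k * q = β * L) :
    (1 + (√β / √α - 1) * (γ * p)) ^ (k - 1) * (1 + (√α / √β - 1) * (γ * q)) ^ k
      ≤ exp (1 - γ * (√α - √β) ^ 2 / 2 * L) := by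
  have ha : 0 < √α := sqrt_pos.2 (hβ.trans hαβ)
  have hb : 0 < √β := sqrt_pos.2 hβ
  have hba : √β < √α := sqrt_lt_sqrt hβ.le hαβ
  have hγp : γ * p ≤ 1 := mul_le_one₀ hγ1 hp0 hp1
  have hd0 : 0 ≤ √β / √α := by positivity
  have hx : 0 ≤ 1 + (√β / √α - 1) * (γ * p) := by nlinarith [mul_nonneg hd0 (mul_nonneg hγ0 hp0)]
  have hy : 0 ≤ (√α / √β - 1) * (γ * q) :=
    mul_nonneg (sub_nonneg.2 ((one_le_div hb).2 hba.le)) (mul_nonneg hγ0 hq0)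
  have hα : √α ^ 2 = α := sq_sqrt (hβ.trans hαβ).le
  have hβ' : √β ^ 2 = β := sq_sqrt hβ.le
  have hdα : √β / √α * α = √α * √β := by
    rw [div_mul_eq_mul_div, div_eq_iff ha.ne']; linear_combination -√β * hα
  have hsβ : √α / √β * β = √α * √β := by
    rw [div_mul_eq_mul_div, div_eq_iff hb.ne']; linear_combination -√α * hβ'
  have hk' : ((k - 1 : ℕ) : ℝ) = k - 1 := by rw [Nat.cast_sub hk, Nat.cast_one]
  calc _ ≤ exp ((k - 1 : ℕ) * ((√β / √α - 1) * (γ * p))) * exp (k * ((√α / √β - 1) * (γ * q))) :=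
        mul_le_mul (one_add_pow_le_exp_mul hx _) (one_add_pow_le_exp_mul (by linarith) _)
          (pow_nonneg (by linarith) _) (exp_nonneg _)
    _ = exp (-(γ * (√α - √β) ^ 2 / 2 * L) + (1 - √β / √α) * (γ * p)) := by
        rw [← exp_add, hk']
        congr 1
        linear_combination (γ / 2 * (√β / √α - 1)) * hp + (γ / 2 * (√α / √β - 1)) * hq
          + (γ * L / 2) * (hdα + hsβ + hα + hβ')
    _ ≤ exp (1 - γ * (√α - √β) ^ 2 / 2 * L) := by
        gcongr
        linarith [mul_le_one₀ (by linarith : 1 - √β / √α ≤ 1) (by positivity) hγp]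

section SampledNeighbours

variable {Ω V : Type*}

def sampledNbr (Edge : V → V → Ω → Bool) (Keep : V → Ω → Bool) (v w : V) : Set Ω :=
  {ω | Keep w ω = true ∧ Edge v w ω = true}

@[simp]
theorem mem_sampledNbr {Edge : V → V → Ω → Bool} {Keep : V → Ω → Bool} {v w : V} {ω : Ω} :
    ω ∈ sampledNbr Edge Keep v w ↔ Keep w ω = true ∧ Edge v w ω = true := Iff.rfl

instance (Edge : V → V → Ω → Bool) (Keep : V → Ω → Bool) (v w : V) :
    DecidablePred (· ∈ sampledNbr Edge Keep v w) :=
  fun _ => decidable_of_iff _ mem_sampledNbr.symm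

theorem measurableSet_sampledNbr [MeasurableSpace Ω] {Edge : V → V → Ω → Bool}
    {Keep : V → Ω → Bool} (hmeasE : ∀ i j, Measurable (Edge i j))
    (hmeasK : ∀ v, Measurable (Keep v)) (v w : V) : MeasurableSet (sampledNbr Edge Keep v w) :=
  (hmeasK w (measurableSet_singleton true)).inter (hmeasE v w (measurableSet_singleton true))

variable [LinearOrder V] {Edge : V → V → Ω → Bool} {Keep : V → Ω → Bool}

def pairIndex {v w : V} (h : v ≠ w) : {p : V × V // p.1 < p.2} :=
  ⟨(min v w, max v w), min_lt_max.2 h⟩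

theorem edge_pairIndex (hsym : ∀ i j, Edge i j = Edge j i) {v w : V} (h : v ≠ w) :
    Edge (pairIndex h).1.1 (pairIndex h).1.2 = Edge v w := by
  simp only [pairIndex]
  rcases le_total v w with hvw | hvw
  · rw [min_eq_left hvw, max_eq_right hvw]
  · rw [min_eq_right hvw, max_eq_left hvw, hsym]

variable [MeasurableSpace Ω] {μ : Measure Ω}

theorem measure_sampledNbr (hsym : ∀ i j, Edge i j = Edge j i)
    (hindep : iIndepFun (m := fun _ => (⊤ : MeasurableSpace Bool))
      (Sum.elim (fun e : {p : V × V // p.1 < p.2} => Edge e.1.1 e.1.2) Keep) μ)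
    {v w : V} (h : v ≠ w) :
    μ (sampledNbr Edge Keep v w) = μ {ω | Keep w ω = true} * μ {ω | Edge v w ω = true} := by
  have hKE : IndepFun (Keep w) (Edge v w) μ := by
    simpa [edge_pairIndex hsym h] using
      hindep.indepFun (i := .inr w) (j := .inl (pairIndex h)) Sum.inr_ne_inl
  exact indepFun_iff_measure_inter_preimage_eq_mul.1 hKE {true} {true} trivial trivial

theorem iIndepSet_sampledNbr (hsym : ∀ i j, Edge i j = Edge j i)
    (hmeasE : ∀ i j, Measurable (Edge i j)) (hmeasK : ∀ v, Measurable (Keep v))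
    (hindep : iIndepFun (m := fun _ => (⊤ : MeasurableSpace Bool))
      (Sum.elim (fun e : {p : V × V // p.1 < p.2} => Edge e.1.1 e.1.2) Keep) μ) (v : V) :
    iIndepSet (fun w : {w // w ≠ v} => sampledNbr Edge Keep v w) μ := by
  set f := Sum.elim (fun e : {p : V × V // p.1 < p.2} => Edge e.1.1 e.1.2) Keep
  have hfm : ∀ i, Measurable (f i) := by
    rintro (e | w)
    exacts [hmeasE _ _, hmeasK w]
  have hpair : (fun w : {w // w ≠ v} => pairIndex w.2.symm).Injective := fun w w' h => by
    simp only [pairIndex, Subtype.mk.injEq, Prod.mk.injEq] at h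
    exact Subtype.ext (by grind)
  have hE := (hindep.iIndepSet_preimage hfm (B := fun _ => {true}) fun _ => trivial)
    |>.inter_of_injective (fun _ => hfm _ trivial) (g := fun w : {w // w ≠ v} => .inr w.1)
      (h := fun w => .inl (pairIndex w.2.symm)) (fun w w' h => Subtype.ext (Sum.inr_injective h))
      (Sum.inl_injective.comp hpair) fun _ _ => Sum.inr_ne_inl
  convert hE using 2 with w
  ext ω
  simp [f, edge_pairIndex hsym w.2.symm]

end SampledNeighbours

theorem card_filter_subtype_ne {V : Type*} [Fintype V] [DecidableEq V] (v : V) (P : V → Prop)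
    [DecidablePred P] : #{w : {w // w ≠ v} | P w} = #(({w | P w} : Finset V).erase v) := by
  refine Finset.card_nbij (·.1) (fun w hw => ?_) (fun w _ w' _ h => Subtype.ext h) fun w hw => ?_
  · simp_all [w.2]
  · simp only [Finset.coe_erase, Finset.coe_filter, Set.mem_sdiff] at hw
    exact ⟨⟨w, by simpa using hw.2⟩, by simpa using hw.1, rfl⟩

section PlantedPartition

variable {Ω : Type*} {k : ℕ} {Edge : Fin (2 * k) → Fin (2 * k) → Ω → Bool}
  {Keep : Fin (2 * k) → Ω → Bool}

@[simp]
theorem mem_plantedS {b : Bool} {v : Fin (2 * k)} : v ∈ plantedS k b ↔ community k v = b := by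
  simp [plantedS]

theorem card_plantedS (k : ℕ) (b : Bool) : #(plantedS k b) = k := by
  have htrue : #(plantedS k true) = k := by
    simp only [plantedS, community, decide_eq_true_eq, Fin.card_filter_val_lt]
    omega
  have hsplit := card_filter_add_card_filter_not (s := univ) (community k · = true)
  cases b
  · simp only [Bool.not_eq_true, card_univ, Fintype.card_fin] at hsplit
    simp only [plantedS] at htrue ⊢
    omega
  · exact htrue

theorem card_filter_community_eq (v : Fin (2 * k)) (b : Bool) :
    #{w : {w // w ≠ v} | community k w = b} = if community k v = b then k - 1 else k := by
  rw [card_filter_subtype_ne v (community k · = b)]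
  change #((plantedS k b).erase v) = _
  split_ifs with h
  · rw [card_erase_of_mem (mem_plantedS.2 h), card_plantedS]
  · rw [erase_eq_of_notMem (mt mem_plantedS.1 h), card_plantedS]

theorem majorityS_sampledR_eq_plantedS {ω : Ω}
    (h : ∀ v, Keep v ω = false →
      edgeCount k Edge v (sampledR k Keep (!community k v) ω) ω
        < edgeCount k Edge v (sampledR k Keep (community k v) ω) ω) (b : Bool) :
    majorityS k Edge Keep (fun b' ω' => sampledR k Keep b' ω') b ω = plantedS k b := by
  ext w
  have hw := h w
  cases hK : Keep w ω <;> cases hc : community k w <;> cases b <;>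
    simp_all [majorityS, sampledR] <;> omega

/-- `e(v, R_b)` with `v` itself left out, since the self-pair `Edge v v` is not one of the
independent edge variables. -/
def sampledNbrCount (Edge : Fin (2 * k) → Fin (2 * k) → Ω → Bool) (Keep : Fin (2 * k) → Ω → Bool)
    (v : Fin (2 * k)) (b : Bool) (ω : Ω) : ℕ :=
  #{w : {w // w ≠ v} | community k w = b ∧ ω ∈ sampledNbr Edge Keep v w}

theorem edgeCount_sampledR {v : Fin (2 * k)} {ω : Ω} (hv : Keep v ω = false) (b : Bool) :
    edgeCount k Edge v (sampledR k Keep b ω) ω = sampledNbrCount Edge Keep v b ω := by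
  rw [sampledNbrCount,
    card_filter_subtype_ne v fun w => community k w = b ∧ ω ∈ sampledNbr Edge Keep v w,
    erase_eq_of_notMem (by simp [hv])]
  simp [edgeCount, sampledR, plantedS, filter_filter, and_assoc]

variable [MeasurableSpace Ω] {μ : Measure Ω}

theorem measureReal_sampledNbrCount_le (hsym : ∀ i j, Edge i j = Edge j i)
    (hmeasE : ∀ i j, Measurable (Edge i j)) (hmeasK : ∀ v, Measurable (Keep v))
    (hindep : iIndepFun (m := fun _ => (⊤ : MeasurableSpace Bool))
      (Sum.elim (fun e : {p : Fin (2 * k) × Fin (2 * k) // p.1 < p.2} => Edge e.1.1 e.1.2) Keep) μ)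
    {γ p q : ℝ} (hγ : 0 ≤ γ) (hp : 0 ≤ p) (hq : 0 ≤ q)
    (hEdge : ∀ i j, i ≠ j →
      μ {ω | Edge i j ω = true} = ENNReal.ofReal (if community k i = community k j then p else q))
    (hKeep : ∀ v, μ {ω | Keep v ω = true} = ENNReal.ofReal γ) (v : Fin (2 * k)) {l : ℝ}
    (hl : 0 ≤ l) :
    μ.real {ω | sampledNbrCount Edge Keep v (community k v) ω
        ≤ sampledNbrCount Edge Keep v (!community k v) ω}
      ≤ (1 + (exp (-l) - 1) * (γ * p)) ^ (k - 1) * (1 + (exp l - 1) * (γ * q)) ^ k := by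
  set c := community k v
  set own : Finset {w // w ≠ v} := {w | community k w = c}
  set other : Finset {w // w ≠ v} := {w | community k w = !c}
  have hA : ∀ w : {w // w ≠ v}, μ.real (sampledNbr Edge Keep v w)
      = γ * if community k w = c then p else q := fun w => by
    rw [measureReal_def, measure_sampledNbr hsym hindep w.2.symm, hKeep, hEdge v w w.2.symm,
      ENNReal.toReal_mul, ENNReal.toReal_ofReal hγ, eq_comm]
    split_ifs with h₁ h₂ h₂
    exacts [by rw [ENNReal.toReal_ofReal hp], absurd h₁.symm h₂, absurd h₂.symm h₁,
      by rw [ENNReal.toReal_ofReal hq]]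
  have hdisj : Disjoint own other := disjoint_filter.2 fun w _ h => by simp [h]
  calc μ.real {ω | sampledNbrCount Edge Keep v c ω ≤ sampledNbrCount Edge Keep v (!c) ω}
      ≤ (∏ w ∈ own, (1 + (exp (-l) - 1) * μ.real (sampledNbr Edge Keep v w)))
        * ∏ w ∈ other, (1 + (exp l - 1) * μ.real (sampledNbr Edge Keep v w)) := by
        simpa only [sampledNbrCount, own, other, filter_filter] using
          (iIndepSet_sampledNbr hsym hmeasE hmeasK hindep v).measureReal_card_le_card_le
            (fun w => measurableSet_sampledNbr hmeasE hmeasK v w) hdisj hl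
    _ = _ := by
        rw [prod_eq_pow_card fun w hw => by rw [hA, if_pos (mem_filter.1 hw).2],
          prod_eq_pow_card fun w hw => by rw [hA, if_neg (by simp [(mem_filter.1 hw).2])],
          card_filter_community_eq, card_filter_community_eq, if_pos rfl, if_neg (by simp [c])]

theorem measure_compl_majorityS_eq_plantedS_le (hsym : ∀ i j, Edge i j = Edge j i)
    (hmeasE : ∀ i j, Measurable (Edge i j)) (hmeasK : ∀ v, Measurable (Keep v))
    (hindep : iIndepFun (m := fun _ => (⊤ : MeasurableSpace Bool))
      (Sum.elim (fun e : {p : Fin (2 * k) × Fin (2 * k) // p.1 < p.2} => Edge e.1.1 e.1.2) Keep) μ)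
    {γ p q : ℝ} (hγ : 0 ≤ γ) (hp : 0 ≤ p) (hq : 0 ≤ q)
    (hEdge : ∀ i j, i ≠ j →
      μ {ω | Edge i j ω = true} = ENNReal.ofReal (if community k i = community k j then p else q))
    (hKeep : ∀ v, μ {ω | Keep v ω = true} = ENNReal.ofReal γ) {l : ℝ} (hl : 0 ≤ l) :
    μ {ω | ∀ b, majorityS k Edge Keep (fun b' ω' => sampledR k Keep b' ω') b ω = plantedS k b}ᶜ
      ≤ ENNReal.ofReal (2 * k *
          ((1 + (exp (-l) - 1) * (γ * p)) ^ (k - 1) * (1 + (exp l - 1) * (γ * q)) ^ k)) := by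
  have := hindep.isProbabilityMeasure
  set fails : Fin (2 * k) → Set Ω := fun v => {ω | sampledNbrCount Edge Keep v (community k v) ω
    ≤ sampledNbrCount Edge Keep v (!community k v) ω}
  have hsub : {ω | ∀ b, majorityS k Edge Keep (fun b' ω' => sampledR k Keep b' ω') b ω
      = plantedS k b}ᶜ ⊆ ⋃ v, fails v := by
    intro ω hω
    by_contra h
    simp only [fails, Set.mem_iUnion, Set.mem_ofPred_eq, not_exists, not_le] at h
    exact hω fun b => majorityS_sampledR_eq_plantedS
      (fun v hv => by simpa only [edgeCount_sampledR hv] using h v) b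
  calc _ ≤ ∑ v, μ (fails v) := (measure_mono hsub).trans (measure_iUnion_fintype_le _ _)
    _ ≤ ∑ _v : Fin (2 * k), ENNReal.ofReal
          ((1 + (exp (-l) - 1) * (γ * p)) ^ (k - 1) * (1 + (exp l - 1) * (γ * q)) ^ k) :=
        sum_le_sum fun v _ => by
          rw [← ofReal_measureReal]
          exact ENNReal.ofReal_le_ofReal (measureReal_sampledNbrCount_le hsym hmeasE hmeasK
            hindep hγ hp hq hEdge hKeep v hl)
    _ = _ := by
        rw [sum_const, card_univ, Fintype.card_fin, nsmul_eq_mul,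
          ENNReal.ofReal_mul (by positivity : (0 : ℝ) ≤ 2 * k)]
        norm_num

end PlantedPartition

theorem tendsto_mul_exp_one_sub_mul_log_atTop {θ : ℝ} (hθ : 1 < θ) :
    Tendsto (fun x => x * exp (1 - θ * log x)) atTop (nhds 0) := by
  have hlim := (tendsto_rpow_neg_atTop (sub_pos.2 hθ)).const_mul (exp 1)
  rw [mul_zero] at hlim
  refine hlim.congr' ?_
  filter_upwards [eventually_gt_atTop 0] with x hx
  calc exp 1 * x ^ (-(θ - 1)) = exp (log x) * exp (1 - θ * log x) := by
        rw [rpow_def_of_pos hx, ← exp_add, ← exp_add]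
        ring_nf
    _ = x * exp (1 - θ * log x) := by rw [exp_log hx]

theorem eventually_mul_log_div_le_one (α : ℝ) :
    ∀ᶠ k : ℕ in atTop, α * log (2 * (k : ℝ)) / (2 * (k : ℝ)) ≤ 1 := by
  have hlim := ((tendsto_pow_log_div_mul_add_atTop 1 0 1 one_ne_zero).const_mul α).comp
    (tendsto_natCast_atTop_atTop.const_mul_atTop two_pos)
  simp only [pow_one, one_mul, add_zero, mul_zero] at hlim
  filter_upwards [hlim.eventually (ge_mem_nhds zero_lt_one)] with k hk
  simpa [mul_div_assoc] using hk

theorem tendsto_measure_of_tendsto_measure_compl {ι : Type*} {L : Filter ι} {Ω : ι → Type*}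
    [∀ i, MeasurableSpace (Ω i)] {μ : ∀ i, Measure (Ω i)} [∀ i, IsProbabilityMeasure (μ i)]
    {S : ∀ i, Set (Ω i)} (h : Tendsto (fun i => μ i (S i)ᶜ) L (nhds 0)) :
    Tendsto (fun i => μ i (S i)) L (nhds 1) := by
  have hsub : Tendsto (fun i => 1 - μ i (S i)ᶜ) L (nhds 1) := by
    simpa using ENNReal.Tendsto.sub tendsto_const_nhds h (.inl ENNReal.one_ne_top)
  refine tendsto_of_tendsto_of_tendsto_of_le_of_le hsub tendsto_const_nhds (fun i => ?_)
    fun i => prob_le_one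
  rw [tsub_le_iff_right, ← measure_univ (μ := μ i)]
  exact measure_univ_le_add_compl _

/-- **Oracle bound** (Proposition 1): in the SBM `G(2k; p, q)` with
`p = α log(2k)/(2k)`, `q = β log(2k)/(2k)`, sampling each vertex independently with
probability `γ > 2/(√α - √β)²`, the majority-vote completion of the true sampled
communities recovers the planted communities with probability `1 - o(1)`. -/
theorem oracle_bound (α β γ : ℝ) (hβ : 0 < β) (hαβ : β < α)
    (hγ : γ ∈ Set.Ioo (0 : ℝ) 1)
    (hγth : γ > 2 / (Real.sqrt α - Real.sqrt β) ^ 2)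
    (Ω : ℕ → Type*) (mΩ : ∀ k, MeasurableSpace (Ω k)) (μ : ∀ k, Measure (Ω k))
    (hprob : ∀ k, IsProbabilityMeasure (μ k))
    (Edge : ∀ k, Fin (2 * k) → Fin (2 * k) → Ω k → Bool)
    (Keep : ∀ k, Fin (2 * k) → Ω k → Bool)
    (hsym : ∀ k i j, Edge k i j = Edge k j i)
    (hmeasE : ∀ k i j, Measurable (Edge k i j))
    (hmeasK : ∀ k v, Measurable (Keep k v))
    (hindep : ∀ k, iIndepFun (m := fun _ => (⊤ : MeasurableSpace Bool))
        (Sum.elim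
          (fun e : {p : Fin (2 * k) × Fin (2 * k) // p.1 < p.2} => Edge k e.1.1 e.1.2)
          (fun v : Fin (2 * k) => Keep k v)) (μ k))
    (hEdge : ∀ k : ℕ, α * Real.log (2 * (k : ℝ)) / (2 * (k : ℝ)) ≤ 1 →
        ∀ i j : Fin (2 * k), i ≠ j →
        μ k {ω | Edge k i j ω = true} =
          ENNReal.ofReal (if community k i = community k j then
              α * Real.log (2 * (k : ℝ)) / (2 * (k : ℝ))
            else β * Real.log (2 * (k : ℝ)) / (2 * (k : ℝ))))
    (hKeep : ∀ k v, μ k {ω | Keep k v ω = true} = ENNReal.ofReal γ) :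
    Tendsto
      (fun k => μ k {ω | ∀ b : Bool,
        majorityS k (Edge k) (Keep k) (fun b' ω' => sampledR k (Keep k) b' ω') b ω
          = plantedS k b})
      atTop (nhds 1) := by
  obtain ⟨hγ0, hγ1⟩ := hγ
  have hα : 0 < α := hβ.trans hαβ
  have hba : √β < √α := sqrt_lt_sqrt hβ.le hαβ
  have hθ : 1 < γ * (√α - √β) ^ 2 / 2 := by
    rw [gt_iff_lt, div_lt_iff₀ (by nlinarith)] at hγth
    linarith
  have hbound := ENNReal.tendsto_ofReal ((tendsto_mul_exp_one_sub_mul_log_atTop hθ).comp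
    (tendsto_natCast_atTop_atTop.const_mul_atTop two_pos))
  rw [ENNReal.ofReal_zero] at hbound
  have := hprob
  refine tendsto_measure_of_tendsto_measure_compl (tendsto_of_tendsto_of_tendsto_of_le_of_le'
    tendsto_const_nhds hbound (.of_forall fun _ => zero_le) ?_)
  filter_upwards [eventually_mul_log_div_le_one α, eventually_ge_atTop 1] with k hp1 hk
  have hL : 0 ≤ log (2 * (k : ℝ)) := log_nonneg (by norm_cast; omega)
  -- `l = log (√α / √β)` is the optimal Chernoff exponent
  have hl : 0 ≤ log (√α / √β) := log_nonneg ((one_le_div (sqrt_pos.2 hβ)).2 hba.le)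
  refine (measure_compl_majorityS_eq_plantedS_le (hsym k) (hmeasE k) (hmeasK k) (hindep k)
    hγ0.le (by positivity) (by positivity) (hEdge k hp1) (hKeep k) hl).trans
    (ENNReal.ofReal_le_ofReal (mul_le_mul_of_nonneg_left ?_ (by positivity)))
  rw [Real.exp_neg, exp_log (by positivity), inv_div]
  exact one_add_pow_mul_one_add_pow_le_exp hβ hαβ hγ0.le hγ1.le hk (by positivity) hp1
    (by positivity) (by field_simp) (by field_simp)
end
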